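/- Under the same hypotheses, the sine transforms satisfy F_s(t) = (6/(5 - 4cos t))·f_s(t), where F_s(t) = ∫₀^∞ sin(xt) dh(x) and f_s(t) = ∫₀¹ sin(xt) dh(x). -/

import Mathlib

/-!
Both transforms are imaginary parts of characteristic functions: `E(t)` of `dh` on `[0, ∞)` and
`e(t)` of `dh` on `[0, 1]`. The functional equations of `h` say that `x ↦ x + 1` pushes `dh` on
`[0, ∞)` forward to `2 dh` on `[1, ∞)`, and that `x ↦ 1 - x` preserves `dh` on `[0, 1]`. Writing
`z = exp (i t)`, this gives `2 (E - e) = z E` and `e = z ē`; multiplying the first by `2 - z̄`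
yields `(5 - 4 cos t) E = 4 e - 2 ē`, whose imaginary part is the claim.
-/

open MeasureTheory Set
open scoped ComplexConjugate
open BoundedContinuousFunction

namespace StieltjesFunction

variable (f : StieltjesFunction ℝ)

theorem measure_Icc_of_continuous (hf : Continuous f) (a b : ℝ) :
    f.measure (Icc a b) = ENNReal.ofReal (f b - f a) := by
  rw [measure_Icc, hf.continuousAt.continuousWithinAt.leftLim_eq]

theorem nullSingletonClass_of_continuous (hf : Continuous f) : NullSingletonClass f.measure :=
  ⟨fun x => by simp [measure_singleton, hf.continuousAt.continuousWithinAt.leftLim_eq]⟩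

theorem map_add_const_restrict_Ici (hf : Continuous f) {a c : ℝ} (hc : 0 ≤ c) (k : NNReal)
    [IsFiniteMeasure (f.measure.restrict (Ici a))]
    (hstep : ∀ x ≥ a, k * (f (x + c) - f (a + c)) = f x - f a) :
    (f.measure.restrict (Ici a)).map (· + c) = (k : ENNReal) • f.measure.restrict (Ici (a + c)) := by
  have : IsFiniteMeasure (f.measure.restrict (Ici (a + c))) :=
    isFiniteMeasure_of_le _ (Measure.restrict_mono (Ici_subset_Ici.2 (by linarith)) le_rfl)
  refine Measure.ext_of_Iic _ _ fun y => ?_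
  have hpre : (· + c) ⁻¹' Iic y = Iic (y - c) := by ext; simp [le_sub_iff_add_le]
  rw [Measure.map_apply (measurable_add_const c) measurableSet_Iic, hpre, Measure.smul_apply,
    Measure.restrict_apply measurableSet_Iic, Measure.restrict_apply measurableSet_Iic,
    Iic_inter_Ici, Iic_inter_Ici, measure_Icc_of_continuous f hf, measure_Icc_of_continuous f hf,
    smul_eq_mul, ← ENNReal.ofReal_coe_nnreal, ← ENNReal.ofReal_mul k.coe_nonneg]
  rcases le_or_gt a (y - c) with hy | hy
  · rw [← hstep _ hy, sub_add_cancel]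
  · rw [ENNReal.ofReal_of_nonpos (by linarith [f.mono hy.le]), ENNReal.ofReal_of_nonpos]
    exact mul_nonpos_of_nonneg_of_nonpos k.2 (by linarith [f.mono (show y ≤ a + c by linarith)])

theorem map_reflect_restrict_Icc (hf : Continuous f) {a b : ℝ}
    (hsym : ∀ x ∈ Icc a b, f x - f a = f b - f (a + b - x)) :
    (f.measure.restrict (Icc a b)).map (a + b - ·) = f.measure.restrict (Icc a b) := by
  have : IsFiniteMeasure (f.measure.restrict (Icc a b)) :=
    isFiniteMeasure_restrict.2 measure_Icc_lt_top.ne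
  refine Measure.ext_of_Iic _ _ fun y => ?_
  have hpre : (a + b - ·) ⁻¹' Iic y = Ici (a + b - y) := by ext; simp
  have hl : Ici (a + b - y) ∩ Icc a b = Icc (max a (a + b - y)) b := by
    ext; simp only [mem_inter_iff, mem_Ici, mem_Icc, max_le_iff]; tauto
  have hr : Iic y ∩ Icc a b = Icc a (min b y) := by
    ext; simp only [mem_inter_iff, mem_Iic, mem_Icc, le_min_iff]; tauto
  rw [Measure.map_apply (by fun_prop) measurableSet_Iic, hpre,
    Measure.restrict_apply measurableSet_Ici, Measure.restrict_apply measurableSet_Iic, hl, hr,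
    measure_Icc_of_continuous f hf, measure_Icc_of_continuous f hf]
  rcases lt_or_ge y a with hya | hay
  · rw [ENNReal.ofReal_of_nonpos, ENNReal.ofReal_of_nonpos]
    · linarith [f.mono (show min b y ≤ a from min_le_of_right_le hya.le)]
    · linarith [f.mono (show b ≤ max a (a + b - y) from le_max_of_le_right (by linarith))]
  rcases le_total y b with hyb | hby
  · rw [max_eq_right (by linarith), min_eq_right hyb, hsym y ⟨hay, hyb⟩]
  · rw [max_eq_left (by linarith), min_eq_left hby]

end StieltjesFunction

theorem restrict_Ici_eq_restrict_Icc_add_restrict_Ici {μ : Measure ℝ} [NullSingletonClass μ]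
    {a b : ℝ} (hab : a ≤ b) : μ.restrict (Ici a) = μ.restrict (Icc a b) + μ.restrict (Ici b) := by
  have hdisj : Disjoint (Ico a b) (Ici b) := (Iio_disjoint_Ici le_rfl).mono_left Ico_subset_Iio_self
  rw [← Ico_union_Ici_eq_Ici hab, Measure.restrict_union hdisj measurableSet_Ici,
    Measure.restrict_congr_set Ico_ae_eq_Icc]

section charFun

variable {E : Type*} [MeasurableSpace E] [NormedAddCommGroup E] [InnerProductSpace ℝ E]

theorem charFun_add_measure [OpensMeasurableSpace E] (μ ν : Measure E) [IsFiniteMeasure μ]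
    [IsFiniteMeasure ν] (t : E) : charFun (μ + ν) t = charFun μ t + charFun ν t := by
  simp only [charFun_eq_integral_innerProbChar]
  exact integral_add_measure ((innerProbChar t).integrable μ) ((innerProbChar t).integrable ν)

theorem charFun_smul_measure (c : ENNReal) (μ : Measure E) (t : E) :
    charFun (c • μ) t = c.toReal * charFun μ t := by
  simp only [charFun_apply, integral_smul_measure, Complex.real_smul]

end charFun

theorem charFun_map_const_sub (μ : Measure ℝ) (c t : ℝ) :
    charFun (μ.map (c - ·)) t = conj (charFun μ t) * Complex.exp (c * t * Complex.I) := by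
  have : (c - ·) = (c + ·) ∘ ((-1 : ℝ) * ·) := by ext; simp [sub_eq_add_neg]
  rw [this, ← Measure.map_map (by fun_prop) (by fun_prop), charFun_map_const_add,
    charFun_map_mul]
  simp [mul_comm (t : ℂ)]

theorem im_charFun_eq_integral_sin (μ : Measure ℝ) [IsFiniteMeasure μ] (t : ℝ) :
    (charFun μ t).im = ∫ x, Real.sin (x * t) ∂μ := by
  rw [charFun_eq_integral_innerProbChar, ← RCLike.im_to_complex,
    ← integral_im ((innerProbChar t).integrable μ)]
  congr with x
  rw [innerProbChar_apply, RCLike.im_to_complex, Complex.exp_ofReal_mul_I_im, real_inner_comm]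
  rfl

theorem two_mul_charFun_sub_eq {μ ν ρ : Measure ℝ} [IsFiniteMeasure μ]
    (hsplit : μ = ν + ρ) (hshift : μ.map (· + 1) = (2 : ENNReal) • ρ) (t : ℝ) :
    2 * (charFun μ t - charFun ν t) = charFun μ t * Complex.exp (t * Complex.I) := by
  have : IsFiniteMeasure ν := isFiniteMeasure_of_le μ (hsplit ▸ Measure.le_add_right le_rfl)
  have : IsFiniteMeasure ρ := isFiniteMeasure_of_le μ (hsplit ▸ Measure.le_add_left le_rfl)
  have hmap := charFun_map_add_const (μ := μ) 1 t
  rw [hshift, charFun_smul_measure, hsplit, charFun_add_measure] at hmap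
  simp only [ENNReal.toReal_ofNat, Complex.ofReal_ofNat, RCLike.inner_apply, conj_trivial,
    mul_one] at hmap
  rw [hsplit, charFun_add_measure, ← hmap]
  ring

theorem five_sub_four_re_mul_im_eq {z E e : ℂ} (hz : Complex.normSq z = 1)
    (hE : 2 * (E - e) = E * z) (he : e = conj e * z) :
    (5 - 4 * z.re) * E.im = 6 * e.im := by
  rw [Complex.normSq_apply] at hz
  have hEre := congrArg Complex.re hE
  have hEim := congrArg Complex.im hE
  have heim := congrArg Complex.im he
  simp only [Complex.mul_re, Complex.mul_im, Complex.sub_re, Complex.sub_im, Complex.conj_re,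
    Complex.conj_im, Complex.re_ofNat, Complex.im_ofNat] at hEre hEim heim
  linear_combination (2 - z.re) * hEim + z.im * hEre - 2 * heim - E.im * hz

theorem shift_identity_of_functional_eqns {g : ℝ → ℝ}
    (heq1 : ∀ x ≥ (0:ℝ), g x = 2 * g (x / (x + 1))) (heq2 : ∀ x > (0:ℝ), g x + g (1 / x) = 2)
    {x : ℝ} (hx : 0 ≤ x) : 2 * (g (x + 1) - g 1) = g x - g 0 := by
  rcases hx.eq_or_lt with rfl | hx
  · simp
  have hg1 : g 1 = 1 := by linarith [heq2 1 one_pos]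
  have hg0 : g 0 = 0 := by linarith [heq1 0 le_rfl]
  have hinv : 1 / x / (1 / x + 1) = 1 / (x + 1) := by field_simp; ring
  have := heq1 (1 / x) (by positivity)
  rw [hinv] at this
  linarith [heq2 x hx, heq2 (x + 1) (by linarith)]

theorem reflect_identity_of_symm {g : ℝ → ℝ} (hsym : ∀ x ∈ Icc (0:ℝ) 1, g x = 1 - g (1 - x))
    {x : ℝ} (hx : x ∈ Icc (0:ℝ) 1) : g x - g 0 = g 1 - g (1 - x) := by
  have h0 := hsym 0 (by simp)
  rw [sub_zero] at h0
  linarith [hsym x hx]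

theorem stmt5_general (h : StieltjesFunction ℝ) (hcont : Continuous (h : ℝ → ℝ))
    (hmass : h.measure (Set.Ici (0:ℝ)) = 2)
    (hsym : ∀ x ∈ Set.Icc (0:ℝ) 1, h x = 1 - h (1 - x))
    (heq1 : ∀ x ≥ (0:ℝ), h x = 2 * h (x / (x + 1)))
    (heq2 : ∀ x > (0:ℝ), h x + h (1 / x) = 2)
    (fs Fs : ℝ → ℝ)
    (hfs : ∀ t : ℝ, fs t = ∫ x in Set.Icc (0:ℝ) 1, Real.sin (x * t) ∂h.measure)
    (hFs : ∀ t : ℝ, Fs t = ∫ x in Set.Ici (0:ℝ), Real.sin (x * t) ∂h.measure) :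
    ∀ t : ℝ, Fs t = (6 / (5 - 4 * Real.cos t)) * fs t := by
  intro t
  have := h.nullSingletonClass_of_continuous hcont
  have : IsFiniteMeasure (h.measure.restrict (Ici 0)) := isFiniteMeasure_restrict.2 (by simp [hmass])
  have : IsFiniteMeasure (h.measure.restrict (Icc 0 1)) :=
    isFiniteMeasure_restrict.2 measure_Icc_lt_top.ne
  have hshift := h.map_add_const_restrict_Ici hcont zero_le_one 2 fun x hx => by
    rw [zero_add, NNReal.coe_ofNat]
    exact shift_identity_of_functional_eqns heq1 heq2 hx
  have hreflect := h.map_reflect_restrict_Icc hcont (a := 0) (b := 1) fun x hx => by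
    rw [zero_add]
    exact reflect_identity_of_symm hsym hx
  simp only [zero_add] at hshift hreflect
  have hE := two_mul_charFun_sub_eq (restrict_Ici_eq_restrict_Icc_add_restrict_Ici zero_le_one)
    hshift t
  have he := charFun_map_const_sub (h.measure.restrict (Icc 0 1)) 1 t
  rw [hreflect, Complex.ofReal_one, one_mul] at he
  have key := five_sub_four_re_mul_im_eq (by simp [Complex.normSq_eq_norm_sq]) hE he
  rw [Complex.exp_ofReal_mul_I_re, im_charFun_eq_integral_sin, im_charFun_eq_integral_sin,
    ← hFs, ← hfs] at key
  have hpos : 0 < 5 - 4 * Real.cos t := by linarith [Real.cos_le_one t]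
  field_simp
  linarith

/-- Under the Minkowski-type hypotheses on `h`, the sine Fourier–Stieltjes transforms
satisfy `F_s t = (6/(5 - 4 cos t)) f_s t`. -/
theorem stmt5 (h : StieltjesFunction ℝ) (hcont : Continuous (h : ℝ → ℝ))
    (hmass : h.measure (Set.Ici (0:ℝ)) = 2)
    (hmass1 : h.measure (Set.Icc (0:ℝ) 1) = 1)
    (hsym : ∀ x ∈ Set.Icc (0:ℝ) 1, h x = 1 - h (1 - x))
    (heq1 : ∀ x ≥ (0:ℝ), h x = 2 * h (x / (x + 1)))
    (heq2 : ∀ x > (0:ℝ), h x + h (1 / x) = 2)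
    (fs Fs : ℝ → ℝ)
    (hfs : ∀ t : ℝ, fs t = ∫ x in Set.Icc (0:ℝ) 1, Real.sin (x * t) ∂h.measure)
    (hFs : ∀ t : ℝ, Fs t = ∫ x in Set.Ici (0:ℝ), Real.sin (x * t) ∂h.measure) :
    ∀ t : ℝ, Fs t = (6 / (5 - 4 * Real.cos t)) * fs t :=
  stmt5_general h hcont hmass hsym heq1 heq2 fs Fs hfs hFs
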